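/- For all n ≥ 0, Q(n) ≤ 1 + f(n) + P(g(n)), where f(n) = ⌈(−1+√(1+8n))/2⌉ and g(n) = f(n)(f(n)+1)/2 − n. -/
import Mathlib


open scoped BigOperators

/-- Boundary of a set of naturals: elements whose predecessor (in ℤ) or successor
is not in the set. Note `z = 0` is always a boundary element of a set containing it,
since `-1` is never in a set of naturals. -/
def bdry (A : Set ℕ) : Set ℕ := {z | z ∈ A ∧ ¬(1 ≤ z ∧ z - 1 ∈ A ∧ z + 1 ∈ A)}

/-- Volume: sum of the elements. -/
noncomputable def vol (A : Set ℕ) : ℕ := ∑ᶠ z ∈ A, z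

/-- Perimeter: sum of the boundary elements. -/
noncomputable def per (A : Set ℕ) : ℕ := ∑ᶠ z ∈ bdry A, z

/-- Minimum perimeter over subsets of ℕ of volume `n`. -/
noncomputable def P (n : ℕ) : ℕ := sInf {p | ∃ A : Set ℕ, vol A = n ∧ per A = p}

/-- Minimum perimeter of the complement over subsets of ℕ of volume `n`. -/
noncomputable def Q (n : ℕ) : ℕ := sInf {p | ∃ A : Set ℕ, vol A = n ∧ per Aᶜ = p}

noncomputable def f (n : ℕ) : ℕ := (⌈(-1 + Real.sqrt (1 + 8 * n)) / 2⌉).toNat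

noncomputable def g (n : ℕ) : ℕ := f n * (f n + 1) / 2 - n

lemma vol_coe (s : Finset ℕ) : vol ↑s = ∑ x ∈ s, x :=
  finsum_mem_coe_finset _ _

lemma vol_finite (S : Set ℕ) (h : S.Finite) : vol S = ∑ x ∈ h.toFinset, x := by
  rw [← vol_coe, h.coe_toFinset]

lemma bdry_subset (A : Set ℕ) : bdry A ⊆ A := fun _ hz => hz.1

lemma finsum_mem_le_finset (S : Set ℕ) (t : Finset ℕ) (h : S ⊆ ↑t) :
    (∑ᶠ z ∈ S, z) ≤ ∑ x ∈ t, x := by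
  have hS : S.Finite := t.finite_toSet.subset h
  rw [show (∑ᶠ z ∈ S, z) = vol S from rfl, vol_finite S hS]
  apply Finset.sum_le_sum_of_subset
  intro x hx
  exact h (hS.mem_toFinset.mp hx)

lemma sum_Icc_one (F : ℕ) : ∑ x ∈ Finset.Icc 1 F, x = F * (F + 1) / 2 := by
  have h1 : Finset.range (F + 1) = insert 0 (Finset.Icc 1 F) := by
    ext x
    simp only [Finset.mem_range, Finset.mem_insert, Finset.mem_Icc]
    omega
  have h2 : ∑ x ∈ Finset.range (F + 1), x = (F + 1) * F / 2 := Finset.sum_range_id (F + 1)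
  rw [h1, Finset.sum_insert (by simp), Nat.zero_add] at h2
  rw [h2, Nat.mul_comm]

/-- Key construction: given a finite set `B` of volume `G < F`, the set
`A = [1, F] \ B` has volume `n` and the perimeter of its complement is at most
`(F+1) + per B`. -/
lemma key (F G n : ℕ) (hGF : G < F) (hn : n + G = F * (F + 1) / 2)
    (B : Set ℕ) (hB : B.Finite) (hvol : vol B = G) :
    ∃ A : Set ℕ, vol A = n ∧ per Aᶜ ≤ (F + 1) + per B := by
  classical
  set Bf : Finset ℕ := hB.toFinset with hBf
  have hBsum : ∑ x ∈ Bf, x = G := by rw [← vol_finite B hB, hvol]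
  have hle : ∀ z ∈ Bf, z ≤ G := by
    intro z hz
    calc z = id z := rfl
    _ ≤ ∑ x ∈ Bf, x := Finset.single_le_sum (fun i _ => Nat.zero_le i) hz
    _ = G := hBsum
  set Bf' : Finset ℕ := Bf.erase 0 with hBf'
  have hBsub : Bf' ⊆ Finset.Icc 1 F := by
    intro z hz
    rw [Finset.mem_Icc]
    have h1 := Finset.ne_of_mem_erase hz
    have h2 := hle z (Finset.mem_of_mem_erase hz)
    omega
  have hB'sum : ∑ x ∈ Bf', x = G := by
    rw [hBf', Finset.sum_erase (f := fun x : ℕ => x) Bf rfl, hBsum]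
  set Af : Finset ℕ := Finset.Icc 1 F \ Bf' with hAf
  refine ⟨↑Af, ?_, ?_⟩
  · rw [vol_coe]
    have hsplit : ∑ x ∈ Af, x + ∑ x ∈ Bf', x = ∑ x ∈ Finset.Icc 1 F, x := by
      rw [hAf]; exact Finset.sum_sdiff hBsub
    rw [hB'sum, sum_Icc_one] at hsplit
    omega
  · -- characterize membership of the complement
    have hAc : ∀ z : ℕ, z ∈ (↑Af : Set ℕ)ᶜ ↔ (z = 0 ∨ z ∈ Bf' ∨ F + 1 ≤ z) := by
      intro z
      have hmem : z ∈ (↑Af : Set ℕ) ↔ (1 ≤ z ∧ z ≤ F) ∧ z ∉ Bf' := by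
        simp [hAf, Finset.mem_sdiff, Finset.mem_Icc]
      rw [Set.mem_compl_iff, hmem]
      by_cases hp : z ∈ Bf'
      · constructor
        · intro _; exact Or.inr (Or.inl hp)
        · intro _ h; exact h.2 hp
      · constructor
        · intro h
          by_cases h0 : z = 0
          · exact Or.inl h0
          · right; right
            by_contra hF
            exact h ⟨⟨by omega, by omega⟩, hp⟩
        · rintro (h0 | hB' | hge) ⟨⟨ha, hb⟩, -⟩
          · omega
          · exact hp hB'
          · omega
    have hbB : (bdry B).Finite := hB.subset (bdry_subset B)
    set Tf : Finset ℕ := insert (F + 1) (insert 0 hbB.toFinset) with hTf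
    have hsub : bdry (↑Af : Set ℕ)ᶜ ⊆ ↑Tf := by
      intro z hz
      obtain ⟨hzA, hznb⟩ := hz
      simp only [hTf, Finset.coe_insert, Set.mem_insert_iff, Finset.mem_coe,
        Set.Finite.mem_toFinset]
      rcases (hAc z).1 hzA with h0 | hB' | hge
      · exact Or.inr (Or.inl h0)
      · -- z ∈ Bf' : show z ∈ bdry B
        right; right
        have hzB : z ∈ B := hB.mem_toFinset.mp (Finset.mem_of_mem_erase hB')
        have hz1 : 1 ≤ z := by
          have := Finset.ne_of_mem_erase hB'; omega
        refine ⟨hzB, ?_⟩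
        rintro ⟨-, hm, hp⟩
        apply hznb
        refine ⟨hz1, ?_, ?_⟩
        · rw [hAc (z - 1)]
          by_cases h0 : z - 1 = 0
          · exact Or.inl h0
          · exact Or.inr (Or.inl (Finset.mem_erase.mpr ⟨h0, hB.mem_toFinset.mpr hm⟩))
        · rw [hAc (z + 1)]
          exact Or.inr (Or.inl (Finset.mem_erase.mpr ⟨by omega, hB.mem_toFinset.mpr hp⟩))
      · by_cases hz1 : z = F + 1
        · exact Or.inl hz1
        · exfalso
          apply hznb
          refine ⟨by omega, ?_, ?_⟩
          · rw [hAc (z - 1)]; right; right; omega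
          · rw [hAc (z + 1)]; right; right; omega
    calc per (↑Af : Set ℕ)ᶜ ≤ ∑ x ∈ Tf, x := finsum_mem_le_finset _ _ hsub
    _ ≤ (F + 1) + ∑ x ∈ insert 0 hbB.toFinset, x := by
        by_cases h : F + 1 ∈ insert 0 hbB.toFinset
        · rw [hTf, Finset.insert_eq_self.mpr h]; omega
        · rw [hTf, Finset.sum_insert h]
    _ = (F + 1) + ∑ x ∈ hbB.toFinset, x := by
        by_cases h : 0 ∈ hbB.toFinset
        · rw [Finset.insert_eq_self.mpr h]
        · rw [Finset.sum_insert h, Nat.zero_add]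
    _ = (F + 1) + per B := by
        rw [show per B = vol (bdry B) from rfl, vol_finite _ hbB]

lemma vol_infinite {B : Set ℕ} (hB : B.Infinite) : vol B = 0 := by
  apply finsum_mem_eq_zero_of_infinite
  have hsub : B \ {0} ⊆ B ∩ Function.support (fun z : ℕ => z) := by
    intro z hz
    exact ⟨hz.1, by simpa using hz.2⟩
  exact (hB.diff (Set.finite_singleton 0)).mono hsub

lemma f_upper (n : ℕ) : 2 * n ≤ f n * (f n + 1) := by
  set x : ℝ := (-1 + Real.sqrt (1 + 8 * (n : ℝ))) / 2 with hx
  have hfn : f n = (⌈x⌉).toNat := rfl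
  have h1 : (x : ℝ) ≤ (f n : ℝ) := by
    have h2 : (⌈x⌉ : ℝ) ≤ ((⌈x⌉.toNat : ℤ) : ℝ) := by
      exact_mod_cast Int.self_le_toNat ⌈x⌉
    calc x ≤ (⌈x⌉ : ℝ) := Int.le_ceil x
    _ ≤ ((⌈x⌉.toNat : ℤ) : ℝ) := h2
    _ = (f n : ℝ) := by rw [hfn]; push_cast; ring
  have hs : Real.sqrt (1 + 8 * (n : ℝ)) ≤ 2 * (f n : ℝ) + 1 := by
    rw [hx] at h1; linarith
  have hsq : (1 + 8 * (n : ℝ)) ≤ (2 * (f n : ℝ) + 1) ^ 2 := by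
    have h0 : (0 : ℝ) ≤ 1 + 8 * (n : ℝ) := by positivity
    nlinarith [Real.sq_sqrt h0, Real.sqrt_nonneg (1 + 8 * (n : ℝ))]
  have hc : (1 : ℝ) + 8 * n ≤ ((2 * f n + 1 : ℕ) : ℝ) ^ 2 := by push_cast; linarith
  have hnat : 1 + 8 * n ≤ (2 * f n + 1) ^ 2 := by exact_mod_cast hc
  nlinarith [hnat]

lemma f_lower (n : ℕ) (hn : 1 ≤ n) : f n * f n < 2 * n + f n := by
  set x : ℝ := (-1 + Real.sqrt (1 + 8 * (n : ℝ))) / 2 with hx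
  have hfn : f n = (⌈x⌉).toNat := rfl
  have hx1 : (1 : ℝ) ≤ x := by
    have h9 : (9 : ℝ) ≤ 1 + 8 * (n : ℝ) := by
      have : (1 : ℝ) ≤ (n : ℝ) := by exact_mod_cast hn
      linarith
    have h3 : (3 : ℝ) ≤ Real.sqrt (1 + 8 * (n : ℝ)) := by
      have := Real.sqrt_le_sqrt h9
      rwa [show Real.sqrt 9 = 3 by
        rw [show (9 : ℝ) = 3 ^ 2 by norm_num, Real.sqrt_sq (by norm_num)]] at this
    rw [hx]; linarith
  have hceil : (1 : ℤ) ≤ ⌈x⌉ := Int.one_le_ceil_iff.mpr (by linarith)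
  have hfe : (f n : ℝ) = (⌈x⌉ : ℝ) := by
    have h := Int.toNat_of_nonneg (show (0 : ℤ) ≤ ⌈x⌉ by omega)
    rw [hfn]
    exact_mod_cast congrArg (fun z : ℤ => (z : ℝ)) h
  have hlt : (f n : ℝ) < x + 1 := by rw [hfe]; exact Int.ceil_lt_add_one x
  have hs : 2 * (f n : ℝ) - 1 < Real.sqrt (1 + 8 * (n : ℝ)) := by
    rw [hx] at hlt; linarith
  have hf1 : (1 : ℝ) ≤ (f n : ℝ) := by
    rw [hfe]; exact_mod_cast hceil
  have hsq : (2 * (f n : ℝ) - 1) ^ 2 < 1 + 8 * (n : ℝ) := by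
    have h0 : (0 : ℝ) ≤ 1 + 8 * (n : ℝ) := by positivity
    nlinarith [Real.sq_sqrt h0, Real.sqrt_nonneg (1 + 8 * (n : ℝ))]
  have hc : ((f n * f n : ℕ) : ℝ) < ((2 * n + f n : ℕ) : ℝ) := by push_cast; nlinarith
  exact_mod_cast hc

theorem stmt_15 (n : ℕ) : Q n ≤ 1 + f n + P (g n) := by
  classical
  rcases Nat.eq_zero_or_pos n with hn0 | hn1
  · -- n = 0 : use A = ∅
    subst hn0
    have h1 : Q 0 ≤ per (∅ : Set ℕ)ᶜ := by
      apply Nat.sInf_le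
      exact ⟨∅, by simp [vol], rfl⟩
    have h2 : per (∅ : Set ℕ)ᶜ = 0 := by
      have hb : bdry (∅ : Set ℕ)ᶜ = {0} := by
        ext z
        simp only [bdry, Set.mem_setOf_eq, Set.compl_empty, Set.mem_univ, true_and, and_true,
          Set.mem_singleton_iff]
        omega
      rw [per, hb]
      simpa using finsum_mem_singleton (f := fun z : ℕ => z) (a := 0)
    omega
  · -- main case
    have hup : 2 * n ≤ f n * (f n + 1) := f_upper n
    have hdn : f n * f n < 2 * n + f n := f_lower n hn1
    have heven : f n * (f n + 1) / 2 * 2 = f n * (f n + 1) := by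
      apply Nat.div_mul_cancel
      rcases Nat.even_or_odd (f n) with h | h
      · exact Dvd.dvd.mul_right h.two_dvd _
      · exact Dvd.dvd.mul_left (Odd.add_one h).two_dvd _
    have hFF : f n * (f n + 1) = f n * f n + f n := by ring
    have hgn : g n = f n * (f n + 1) / 2 - n := rfl
    have hnG : n + g n = f n * (f n + 1) / 2 := by omega
    have hGF : g n < f n := by omega
    -- obtain a finite near-minimizer
    have hex : ∃ B : Set ℕ, B.Finite ∧ vol B = g n ∧ per B ≤ P (g n) := by
      rcases Nat.eq_zero_or_pos (g n) with hG0 | hG1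
      · refine ⟨∅, Set.finite_empty, by simp [vol, hG0], ?_⟩
        have hpe : per (∅ : Set ℕ) = 0 := by
          have hb : bdry (∅ : Set ℕ) = ∅ := Set.eq_empty_of_subset_empty (bdry_subset ∅)
          simp [per, hb]
        omega
      · have hne : {p | ∃ A : Set ℕ, vol A = g n ∧ per A = p}.Nonempty :=
          ⟨per {g n}, {g n}, by simpa [vol] using finsum_mem_singleton, rfl⟩
        obtain ⟨B, hBvol, hBper⟩ := Nat.sInf_mem hne
        refine ⟨B, ?_, hBvol, le_of_eq hBper⟩
        by_contra hinf
        rw [vol_infinite hinf] at hBvol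
        omega
    obtain ⟨B, hBfin, hBvol, hBper⟩ := hex
    obtain ⟨A, hAvol, hAper⟩ := key (f n) (g n) n hGF hnG B hBfin hBvol
    have hQ : Q n ≤ per Aᶜ := Nat.sInf_le ⟨A, hAvol, rfl⟩
    calc Q n ≤ per Aᶜ := hQ
    _ ≤ (f n + 1) + per B := hAper
    _ ≤ 1 + f n + P (g n) := by omega
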